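/- With the notation of the context, suppose r1 ≥ 1 and n_{r1} = 0. Then for all x > 0, Ω^{(α)}[n_1,…,n_{r1}; m_1,…,m_{r2}; m'_1,…,m'_{r3}; n'_1,…,n'_{r4}](x) = (∏_{i=1}^{r3}(m'_i − α) · ∏_{i=1}^{r4}(n'_i + 1)) · Ω^{(α+1)}[n_1−1,…,n_{r1−1}−1; m_1,…,m_{r2}; m'_1,…,m'_{r3}; n'_1+1,…,n'_{r4}+1](x), where on the right-hand side the first sequence has r1−1 entries (the entry n_{r1} = 0 has been removed and every remaining entry decreased by 1). -/

import Mathlib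

open scoped BigOperators

/-- The Laguerre polynomial `L_n^{(α)}` as a function on `ℝ`; it is `0` for `n < 0`. -/
noncomputable def laguerre (α : ℝ) (n : ℤ) (x : ℝ) : ℝ :=
  if n < 0 then 0 else
    ∑ k ∈ Finset.range (n.toNat + 1),
      ((-1 : ℝ) ^ k / (Nat.factorial k : ℝ)) *
        ((∏ i ∈ Finset.Icc (k + 1) n.toNat, (α + (i : ℝ))) / (Nat.factorial (n.toNat - k) : ℝ)) *
        x ^ k

/-- The Wronskian `Wr[f_1, …, f_r](x) = det (f_i^{(j-1)}(x))`. -/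
noncomputable def Wr {r : ℕ} (f : Fin r → ℝ → ℝ) (x : ℝ) : ℝ :=
  Matrix.det (Matrix.of fun i j : Fin r => iteratedDeriv (j : ℕ) (f i) x)

/-- `Ω^{(α)}[n_1,…,n_{r1}; m_1,…,m_{r2}; m'_1,…,m'_{r3}; n'_1,…,n'_{r4}](x)
  = e^{−(r2+r4)x} x^{(α+r1+r2)(r3+r4)} Wr[f_1,…,f_r](x)` built out of the four types of
eigenfunctions of the Laguerre differential operator (0-indexed sequences `a, b, c, d`). -/
noncomputable def Omega4 (α : ℝ) (r1 r2 r3 r4 : ℕ) (a b c d : ℕ → ℕ) (x : ℝ) : ℝ :=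
  Real.exp (-((r2 : ℝ) + (r4 : ℝ)) * x) *
    x ^ ((α + (r1 : ℝ) + (r2 : ℝ)) * ((r3 : ℝ) + (r4 : ℝ))) *
    Wr (fun i : Fin (r1 + r2 + r3 + r4) => fun y =>
      if (i : ℕ) < r1 then laguerre α (a (i : ℕ)) y
      else if (i : ℕ) < r1 + r2 then Real.exp y * laguerre α (b ((i : ℕ) - r1)) (-y)
      else if (i : ℕ) < r1 + r2 + r3 then
        y ^ (-α) * laguerre (-α) (c ((i : ℕ) - r1 - r2)) y
      else Real.exp y * y ^ (-α) * laguerre (-α) (d ((i : ℕ) - r1 - r2 - r3)) (-y)) x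

/-!
Since `n_{r1} = 0`, the entry `f_{r1} = L_0^{(α)}` is the constant `1`; expanding the Wronskian
along its row leaves, up to the sign `(-1)^(r1-1)`, the Wronskian of the derivatives of the other
entries. Each derivative is a constant multiple of an entry of the same kind for the parameter
`α + 1`:
`(L_n^{(α)})' = -L_{n-1}^{(α+1)}`, `(e^x L_m^{(α)}(-x))' = e^x L_m^{(α+1)}(-x)`,
`(x^{-α} L_m^{(-α)}(x))' = (m - α) x^{-α-1} L_m^{(-α-1)}(x)` and
`(e^x x^{-α} L_n^{(-α)}(-x))' = (n + 1) e^x x^{-α-1} L_{n+1}^{(-α-1)}(-x)`,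
by the contiguous relations of the Laguerre polynomials, which are Pascal-type identities for
their coefficients. The `r1 - 1` factors `-1` cancel the sign of the expansion, and the prefactors
of both sides agree because `α + r1 + r2 = (α + 1) + (r1 - 1) + r2`.
-/

open Finset Filter Topology

noncomputable def laguerreCoeff (α : ℝ) (n k : ℕ) : ℝ :=
  (-1 : ℝ) ^ k / (k.factorial : ℝ) *
    ((∏ i ∈ Icc (k + 1) n, (α + (i : ℝ))) / ((n - k).factorial : ℝ))

lemma laguerre_natCast (α : ℝ) (n : ℕ) (x : ℝ) :
    laguerre α n x = ∑ k ∈ range (n + 1), laguerreCoeff α n k * x ^ k := by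
  simp [laguerre, laguerreCoeff]

lemma laguerre_zero (α : ℝ) : laguerre α 0 = fun _ => 1 := by
  funext x
  simp [laguerre]

lemma laguerre_of_neg (α : ℝ) {n : ℤ} (hn : n < 0) : laguerre α n = fun _ => 0 := by
  funext x
  simp [laguerre, hn]

lemma prod_Icc_add_one_add_one (α : ℝ) (a b : ℕ) :
    ∏ i ∈ Icc (a + 1) (b + 1), (α + (i : ℝ)) = ∏ i ∈ Icc a b, (α + 1 + (i : ℝ)) := by
  rw [← map_add_right_Icc a b 1, prod_map]
  refine prod_congr rfl fun i _ => ?_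
  simp only [addRightEmbedding_apply, Nat.cast_add, Nat.cast_one]
  ring

lemma prod_Icc_eq_mul_prod_Icc {a b : ℕ} (h : a ≤ b) (f : ℕ → ℝ) :
    ∏ i ∈ Icc a b, f i = f a * ∏ i ∈ Icc (a + 1) b, f i := by
  rw [← insert_Icc_add_one_left_eq_Icc h, prod_insert (by simp)]

lemma laguerreCoeff_succ_mul (α : ℝ) {n k : ℕ} (hk : k ≤ n) :
    laguerreCoeff α (n + 1) (k + 1) * ((k : ℝ) + 1) = -laguerreCoeff (α + 1) n k := by
  unfold laguerreCoeff
  rw [show n + 1 - (k + 1) = n - k by omega, prod_Icc_add_one_add_one α (k + 1) n,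
    Nat.factorial_succ]
  have : (k.factorial : ℝ) ≠ 0 := by positivity
  field_simp
  push_cast
  ring

lemma laguerreCoeff_add_one (α : ℝ) {n k : ℕ} (hk : k ≤ n) :
    laguerreCoeff (α + 1) (n + 1) k = laguerreCoeff α (n + 1) k + laguerreCoeff (α + 1) n k := by
  have hP : ∏ i ∈ Icc (k + 1) (n + 1), (α + 1 + (i : ℝ)) =
      ∏ i ∈ Icc (k + 1) (n + 1), (α + (i : ℝ)) +
        ((n : ℝ) - k + 1) * ∏ i ∈ Icc (k + 1) n, (α + 1 + (i : ℝ)) := by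
    rw [prod_Icc_succ_top (by omega : k + 1 ≤ n + 1) (fun i => α + 1 + (i : ℝ)),
      prod_Icc_eq_mul_prod_Icc (by omega : k + 1 ≤ n + 1), prod_Icc_add_one_add_one α (k + 1) n]
    push_cast
    ring
  have hnk : (n : ℝ) - k + 1 ≠ 0 := by
    have : (k : ℝ) ≤ n := by exact_mod_cast hk
    linarith
  unfold laguerreCoeff
  rw [hP, show n + 1 - k = n - k + 1 by omega, Nat.factorial_succ]
  push_cast [Nat.cast_sub hk]
  field_simp

lemma add_mul_laguerreCoeff (β : ℝ) {n k : ℕ} (hk : k ≤ n) :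
    (β + k) * laguerreCoeff β n k = ((n : ℝ) + β) * laguerreCoeff (β - 1) n k := by
  have hP : (β + k) * ∏ i ∈ Icc (k + 1) n, (β + (i : ℝ)) =
      ((n : ℝ) + β) * ∏ i ∈ Icc (k + 1) n, (β - 1 + (i : ℝ)) := by
    obtain rfl | hlt := hk.eq_or_lt
    · simp [add_comm]
    obtain ⟨m, rfl⟩ : ∃ m, n = m + 1 := ⟨n - 1, by omega⟩
    rw [← prod_Icc_eq_mul_prod_Icc hk (fun i => β + (i : ℝ)), prod_Icc_add_one_add_one,
      sub_add_cancel, prod_Icc_succ_top (by omega : k ≤ m + 1)]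
    push_cast
    ring
  unfold laguerreCoeff
  linear_combination (-1 : ℝ) ^ k / (k.factorial : ℝ) / ((n - k).factorial : ℝ) * hP

lemma laguerre_add_one (α y : ℝ) (n : ℤ) :
    laguerre (α + 1) n y = laguerre α n y + laguerre (α + 1) (n - 1) y := by
  obtain hn | rfl | hn := lt_trichotomy n 0
  · simp [laguerre_of_neg _ hn, laguerre_of_neg _ (show n - 1 < 0 by omega)]
  · simp [laguerre_zero, laguerre_of_neg _ (show (-1 : ℤ) < 0 by omega)]
  obtain ⟨m, rfl⟩ : ∃ m : ℕ, n = m + 1 := ⟨(n - 1).toNat, by omega⟩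
  rw [add_sub_cancel_right, ← Nat.cast_succ, laguerre_natCast, laguerre_natCast,
    laguerre_natCast, sum_range_succ, sum_range_succ (fun k => laguerreCoeff α (m + 1) k * y ^ k)]
  have htop : laguerreCoeff (α + 1) (m + 1) (m + 1) = laguerreCoeff α (m + 1) (m + 1) := by
    simp [laguerreCoeff]
  have hlow : ∀ k ∈ range (m + 1), laguerreCoeff (α + 1) (m + 1) k * y ^ k =
      laguerreCoeff α (m + 1) k * y ^ k + laguerreCoeff (α + 1) m k * y ^ k := fun k hk => by
    rw [laguerreCoeff_add_one α (Nat.lt_succ_iff.mp (mem_range.mp hk)), add_mul]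
  rw [sum_congr rfl hlow, sum_add_distrib, htop]
  ring

lemma hasDerivAt_laguerre (α : ℝ) (n : ℤ) (x : ℝ) :
    HasDerivAt (laguerre α n) (-laguerre (α + 1) (n - 1) x) x := by
  obtain hn | rfl | hn := lt_trichotomy n 0
  · simpa [laguerre_of_neg _ hn, laguerre_of_neg _ (show n - 1 < 0 by omega)]
      using hasDerivAt_const x (0 : ℝ)
  · simpa [laguerre_zero, laguerre_of_neg _ (show (-1 : ℤ) < 0 by omega)]
      using hasDerivAt_const x (1 : ℝ)
  obtain ⟨m, rfl⟩ : ∃ m : ℕ, n = m + 1 := ⟨(n - 1).toNat, by omega⟩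
  have h : HasDerivAt (fun y => ∑ k ∈ range (m + 1 + 1), laguerreCoeff α (m + 1) k * y ^ k)
      (∑ k ∈ range (m + 1 + 1), laguerreCoeff α (m + 1) k * ((k : ℝ) * x ^ (k - 1))) x :=
    HasDerivAt.fun_sum fun k _ => (hasDerivAt_pow k x).const_mul _
  rw [add_sub_cancel_right, ← Nat.cast_succ]
  convert h using 1
  · exact funext (laguerre_natCast α (m + 1))
  rw [laguerre_natCast,
    sum_range_succ' (fun k => laguerreCoeff α (m + 1) k * ((k : ℝ) * x ^ (k - 1))),
    ← sum_neg_distrib]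
  simp only [Nat.cast_zero, zero_mul, mul_zero, add_zero, Nat.add_sub_cancel]
  refine sum_congr rfl fun k hk => ?_
  have := laguerreCoeff_succ_mul α (Nat.lt_succ_iff.mp (mem_range.mp hk))
  push_cast
  linear_combination (-x ^ k) * this

lemma add_mul_laguerre_sub_one (β y : ℝ) (n : ℕ) :
    ((n : ℝ) + β) * laguerre (β - 1) n y =
      β * laguerre β n y - y * laguerre (β + 1) ((n : ℤ) - 1) y := by
  symm
  cases n with
  | zero => simp [laguerre_zero, laguerre_of_neg _ (show (-1 : ℤ) < 0 by omega)]
  | succ m =>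
    rw [Nat.cast_succ, add_sub_cancel_right, ← Nat.cast_succ, laguerre_natCast, laguerre_natCast,
      laguerre_natCast]
    have hshift : y * ∑ k ∈ range (m + 1), laguerreCoeff (β + 1) m k * y ^ k =
        -∑ k ∈ range (m + 1 + 1), (k : ℝ) * (laguerreCoeff β (m + 1) k * y ^ k) := by
      rw [sum_range_succ' (fun k => (k : ℝ) * (laguerreCoeff β (m + 1) k * y ^ k)), mul_sum]
      simp only [Nat.cast_zero, zero_mul, add_zero]
      rw [← sum_neg_distrib]
      refine sum_congr rfl fun k hk => ?_
      have := laguerreCoeff_succ_mul β (Nat.lt_succ_iff.mp (mem_range.mp hk))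
      push_cast
      linear_combination y ^ (k + 1) * this
    rw [hshift, sub_neg_eq_add, mul_sum, mul_sum, ← sum_add_distrib]
    refine sum_congr rfl fun k hk => ?_
    have := add_mul_laguerreCoeff β (Nat.lt_succ_iff.mp (mem_range.mp hk))
    push_cast at this ⊢
    linear_combination y ^ k * this

lemma succ_mul_laguerre_sub_one_succ (β y : ℝ) (n : ℕ) :
    ((n : ℝ) + 1) * laguerre (β - 1) ((n : ℤ) + 1) y =
      ((n : ℝ) + β) * laguerre (β - 1) n y - y * laguerre β n y := by
  have h₁ := add_mul_laguerre_sub_one β y n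
  have h₂ := add_mul_laguerre_sub_one β y (n + 1)
  have h₃ := laguerre_add_one (β - 1) y ((n : ℤ) + 1)
  have h₄ := laguerre_add_one β y n
  rw [sub_add_cancel, add_sub_cancel_right] at h₃
  push_cast at h₂
  rw [add_sub_cancel_right] at h₂
  -- eliminate `L_{n+1}^{(β)}` and `L_{n-1}^{(β+1)}` between the relations at `n` and `n + 1`
  linear_combination h₂ - h₁ + β * h₃ - y * h₄

lemma hasDerivAt_exp_mul_laguerre_neg (α : ℝ) (n : ℤ) (x : ℝ) :
    HasDerivAt (fun y => Real.exp y * laguerre α n (-y))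
      (Real.exp x * laguerre (α + 1) n (-x)) x := by
  have hL : HasDerivAt (fun y => laguerre α n (-y)) (laguerre (α + 1) (n - 1) (-x)) x := by
    simpa [Function.comp_def] using (hasDerivAt_laguerre α n (-x)).comp x (hasDerivAt_neg x)
  refine ((Real.hasDerivAt_exp x).mul hL).congr_deriv ?_
  rw [laguerre_add_one α (-x) n]
  ring

lemma hasDerivAt_rpow_mul_laguerre (α : ℝ) (n : ℕ) {x : ℝ} (hx : 0 < x) :
    HasDerivAt (fun y => y ^ (-α) * laguerre (-α) n y)
      (((n : ℝ) - α) * (x ^ (-(α + 1)) * laguerre (-(α + 1)) n x)) x := by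
  have hpow : HasDerivAt (fun y => y ^ (-α)) (-α * x ^ (-α - 1)) x :=
    Real.hasDerivAt_rpow_const (Or.inl hx.ne')
  refine (hpow.mul (hasDerivAt_laguerre (-α) n x)).congr_deriv ?_
  have hsplit : x ^ (-α) = x ^ (-α - 1) * x := by
    rw [← Real.rpow_add_one hx.ne', sub_add_cancel]
  rw [show -(α + 1) = -α - 1 by ring, hsplit]
  linear_combination -x ^ (-α - 1) * add_mul_laguerre_sub_one (-α) x n

lemma hasDerivAt_exp_mul_rpow_mul_laguerre_neg (α : ℝ) (n : ℕ) {x : ℝ} (hx : 0 < x) :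
    HasDerivAt (fun y => Real.exp y * y ^ (-α) * laguerre (-α) n (-y))
      (((n : ℝ) + 1) *
        (Real.exp x * x ^ (-(α + 1)) * laguerre (-(α + 1)) ((n : ℤ) + 1) (-x))) x := by
  have hpow : HasDerivAt (fun y => Real.exp y * y ^ (-α))
      (Real.exp x * x ^ (-α) + Real.exp x * (-α * x ^ (-α - 1))) x :=
    (Real.hasDerivAt_exp x).mul (Real.hasDerivAt_rpow_const (Or.inl hx.ne'))
  have hL : HasDerivAt (fun y => laguerre (-α) n (-y))
      (laguerre (-α + 1) ((n : ℤ) - 1) (-x)) x := by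
    simpa [Function.comp_def] using (hasDerivAt_laguerre (-α) n (-x)).comp x (hasDerivAt_neg x)
  refine (hpow.mul hL).congr_deriv ?_
  have hsplit : x ^ (-α) = x ^ (-α - 1) * x := by
    rw [← Real.rpow_add_one hx.ne', sub_add_cancel]
  rw [show -(α + 1) = -α - 1 by ring, hsplit]
  linear_combination -Real.exp x * x ^ (-α - 1) *
    (succ_mul_laguerre_sub_one_succ (-α) (-x) n + add_mul_laguerre_sub_one (-α) (-x) n)

lemma Wr_congr {r : ℕ} {f g : Fin r → ℝ → ℝ} {x : ℝ} (h : ∀ i, f i =ᶠ[𝓝 x] g i) :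
    Wr f x = Wr g x := by
  unfold Wr
  congr 1
  ext i j
  exact (h i).iteratedDeriv_eq j

lemma Wr_const_mul {r : ℕ} (e : Fin r → ℝ) (g : Fin r → ℝ → ℝ) (x : ℝ) :
    Wr (fun i y => e i * g i y) x = (∏ i, e i) * Wr g x := by
  simp only [Wr, iteratedDeriv_const_mul_field]
  exact Matrix.det_mul_column e _

lemma Wr_of_eq_one {r : ℕ} (f : Fin (r + 1) → ℝ → ℝ) (p : Fin (r + 1)) (hp : f p = fun _ => 1)
    (x : ℝ) : Wr f x = (-1) ^ (p : ℕ) * Wr (fun i => deriv (f (p.succAbove i))) x := by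
  unfold Wr
  rw [Matrix.det_succ_row _ p, sum_eq_single 0]
  · simp only [Matrix.of_apply, hp, Fin.val_zero, iteratedDeriv_zero, add_zero, mul_one]
    congr 2
    ext i j
    simp [iteratedDeriv_succ']
  · intro j _ hj
    simp [hp, iteratedDeriv_const, Fin.val_ne_zero_iff.mpr hj]
  · simp

lemma Wr_comp_val_of_eq {m n : ℕ} (h : m = n) (f : ℕ → ℝ → ℝ) (x : ℝ) :
    Wr (fun i : Fin m => f i) x = Wr (fun i : Fin n => f i) x := by
  subst h
  rfl

lemma Wr_comp_val_of_eq_one {r : ℕ} (f : ℕ → ℝ → ℝ) {p : ℕ} (hpr : p ≤ r) (hp : f p = fun _ => 1)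
    (x : ℝ) :
    Wr (fun i : Fin (r + 1) => f i) x =
      (-1) ^ p * Wr (fun i : Fin r => deriv (f (if (i : ℕ) < p then i else i + 1))) x := by
  rw [Wr_of_eq_one _ ⟨p, Nat.lt_succ_of_le hpr⟩ hp]
  congr 3 with i
  split_ifs with h
  · rw [Fin.succAbove_of_castSucc_lt _ _ h, Fin.val_castSucc]
  · rw [Fin.succAbove_of_le_castSucc _ _ (not_lt.mp h), Fin.val_succ]

noncomputable def omegaEntry (α : ℝ) (r1 r2 r3 : ℕ) (a b c d : ℕ → ℕ) (i : ℕ) (y : ℝ) : ℝ :=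
  if i < r1 then laguerre α (a i) y
  else if i < r1 + r2 then Real.exp y * laguerre α (b (i - r1)) (-y)
  else if i < r1 + r2 + r3 then y ^ (-α) * laguerre (-α) (c (i - r1 - r2)) y
  else Real.exp y * y ^ (-α) * laguerre (-α) (d (i - r1 - r2 - r3)) (-y)

lemma Omega4_eq_mul_Wr (α : ℝ) (r1 r2 r3 r4 : ℕ) (a b c d : ℕ → ℕ) (x : ℝ) :
    Omega4 α r1 r2 r3 r4 a b c d x =
      Real.exp (-((r2 : ℝ) + r4) * x) * x ^ ((α + r1 + r2) * ((r3 : ℝ) + r4)) *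
        Wr (fun i : Fin (r1 + r2 + r3 + r4) => omegaEntry α r1 r2 r3 a b c d i) x :=
  rfl

noncomputable def omegaDerivFactor (α : ℝ) (s r2 r3 : ℕ) (c d : ℕ → ℕ) (i : ℕ) : ℝ :=
  if i < s then -1
  else if i < s + r2 then 1
  else if i < s + r2 + r3 then (c (i - s - r2) : ℝ) - α
  else (d (i - s - r2 - r3) : ℝ) + 1

lemma prod_omegaDerivFactor (α : ℝ) (s r2 r3 r4 : ℕ) (c d : ℕ → ℕ) :
    ∏ i ∈ range (s + r2 + r3 + r4), omegaDerivFactor α s r2 r3 c d i =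
      (-1) ^ s * ((∏ i ∈ range r3, ((c i : ℝ) - α)) * ∏ i ∈ range r4, ((d i : ℝ) + 1)) := by
  have h₁ : ∀ i ∈ range s, omegaDerivFactor α s r2 r3 c d i = -1 := fun i hi =>
    if_pos (mem_range.mp hi)
  have h₂ : ∀ i ∈ range r2, omegaDerivFactor α s r2 r3 c d (s + i) = 1 := fun i hi => by
    have := mem_range.mp hi
    rw [omegaDerivFactor, if_neg (by omega), if_pos (by omega)]
  have h₃ : ∀ i ∈ range r3, omegaDerivFactor α s r2 r3 c d (s + r2 + i) = (c i : ℝ) - α :=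
    fun i hi => by
      have := mem_range.mp hi
      rw [omegaDerivFactor, if_neg (by omega), if_neg (by omega), if_pos (by omega),
        show s + r2 + i - s - r2 = i by omega]
  have h₄ : ∀ i ∈ range r4, omegaDerivFactor α s r2 r3 c d (s + r2 + r3 + i) = (d i : ℝ) + 1 :=
    fun i _ => by
      rw [omegaDerivFactor, if_neg (by omega), if_neg (by omega), if_neg (by omega),
        show s + r2 + r3 + i - s - r2 - r3 = i by omega]
  rw [prod_range_add, prod_range_add, prod_range_add, prod_congr rfl h₁, prod_congr rfl h₂,
    prod_congr rfl h₃, prod_congr rfl h₄, prod_const, card_range, prod_const_one, mul_one,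
    mul_assoc]

lemma omegaEntry_self_eq_one (α : ℝ) (s r2 r3 : ℕ) (a b c d : ℕ → ℕ) (ha : a s = 0) :
    omegaEntry α (s + 1) r2 r3 a b c d s = fun _ => 1 := by
  funext y
  simp [omegaEntry, ha, laguerre_zero]

lemma omegaEntry_succ_succ_of_le (α : ℝ) (s r2 r3 : ℕ) (a b c d : ℕ → ℕ) {i : ℕ} (hi : s ≤ i) :
    omegaEntry α (s + 1) r2 r3 a b c d (i + 1) = omegaEntry α s r2 r3 a b c d i := by
  funext y
  unfold omegaEntry
  split_ifs <;> first | omega | simp only [Nat.add_sub_add_right]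

lemma deriv_omegaEntry_of_lt (α : ℝ) (s r2 r3 : ℕ) (a b c d : ℕ → ℕ) {i : ℕ} (hi : i < s)
    (hai : a i ≠ 0) :
    deriv (omegaEntry α (s + 1) r2 r3 a b c d i) =
      fun y => omegaDerivFactor α s r2 r3 c d i *
        omegaEntry (α + 1) s r2 r3 (a · - 1) b c (d · + 1) i y := by
  have hcast : ((a i - 1 : ℕ) : ℤ) = a i - 1 := by omega
  have hf : omegaEntry α (s + 1) r2 r3 a b c d i = laguerre α (a i) := by
    funext y
    simp only [omegaEntry, if_pos (show i < s + 1 by omega)]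
  funext y
  simp only [hf, (hasDerivAt_laguerre α _ y).deriv, omegaDerivFactor, omegaEntry, if_pos hi, hcast]
  ring

lemma deriv_omegaEntry_of_ge (α : ℝ) (s r2 r3 : ℕ) (a b c d : ℕ → ℕ) {i : ℕ} (hi : s ≤ i)
    {x : ℝ} (hx : 0 < x) :
    deriv (omegaEntry α s r2 r3 a b c d i) =ᶠ[𝓝 x]
      fun y => omegaDerivFactor α s r2 r3 c d i *
        omegaEntry (α + 1) s r2 r3 (a · - 1) b c (d · + 1) i y := by
  have h₁ : ¬i < s := not_lt.mpr hi
  obtain h₂ | h₂ := lt_or_ge i (s + r2)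
  · have hf : omegaEntry α s r2 r3 a b c d i =
        fun y => Real.exp y * laguerre α (b (i - s)) (-y) := by
      funext y
      simp only [omegaEntry, if_neg h₁, if_pos h₂]
    refine .of_forall fun y => ?_
    simp only [hf, (hasDerivAt_exp_mul_laguerre_neg α _ y).deriv, omegaDerivFactor, omegaEntry,
      if_neg h₁, if_pos h₂, one_mul]
  have h₂' : ¬i < s + r2 := not_lt.mpr h₂
  obtain h₃ | h₃ := lt_or_ge i (s + r2 + r3)
  · have hf : omegaEntry α s r2 r3 a b c d i =
        fun y => y ^ (-α) * laguerre (-α) (c (i - s - r2)) y := by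
      funext y
      simp only [omegaEntry, if_neg h₁, if_neg h₂', if_pos h₃]
    filter_upwards [Ioi_mem_nhds hx] with y hy
    simp only [hf, (hasDerivAt_rpow_mul_laguerre α _ hy).deriv, omegaDerivFactor, omegaEntry,
      if_neg h₁, if_neg h₂', if_pos h₃]
  · have h₃' : ¬i < s + r2 + r3 := not_lt.mpr h₃
    have hf : omegaEntry α s r2 r3 a b c d i =
        fun y => Real.exp y * y ^ (-α) * laguerre (-α) (d (i - s - r2 - r3)) (-y) := by
      funext y
      simp only [omegaEntry, if_neg h₁, if_neg h₂', if_neg h₃']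
    filter_upwards [Ioi_mem_nhds hx] with y hy
    simp only [hf, (hasDerivAt_exp_mul_rpow_mul_laguerre_neg α _ hy).deriv, omegaDerivFactor,
      omegaEntry, if_neg h₁, if_neg h₂', if_neg h₃', Nat.cast_add, Nat.cast_one]

lemma deriv_omegaEntry_eventuallyEq (α : ℝ) (s r2 r3 : ℕ) (a b c d : ℕ → ℕ)
    (ha : ∀ i < s, a i ≠ 0) {x : ℝ} (hx : 0 < x) (i : ℕ) :
    deriv (omegaEntry α (s + 1) r2 r3 a b c d (if i < s then i else i + 1)) =ᶠ[𝓝 x]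
      fun y => omegaDerivFactor α s r2 r3 c d i *
        omegaEntry (α + 1) s r2 r3 (a · - 1) b c (d · + 1) i y := by
  split_ifs with hi
  · rw [deriv_omegaEntry_of_lt α s r2 r3 a b c d hi (ha i hi)]
  · rw [omegaEntry_succ_succ_of_le α s r2 r3 a b c d (not_lt.mp hi)]
    exact deriv_omegaEntry_of_ge α s r2 r3 a b c d (not_lt.mp hi) hx

lemma Wr_omegaEntry_of_eq_zero (α : ℝ) (s r2 r3 r4 : ℕ) (a b c d : ℕ → ℕ)
    (ha : ∀ i < s, a i ≠ 0) (has : a s = 0) {x : ℝ} (hx : 0 < x) :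
    Wr (fun i : Fin (s + 1 + r2 + r3 + r4) => omegaEntry α (s + 1) r2 r3 a b c d i) x =
      ((∏ i ∈ range r3, ((c i : ℝ) - α)) * ∏ i ∈ range r4, ((d i : ℝ) + 1)) *
        Wr (fun i : Fin (s + r2 + r3 + r4) =>
          omegaEntry (α + 1) s r2 r3 (a · - 1) b c (d · + 1) i) x := by
  rw [Wr_comp_val_of_eq (show s + 1 + r2 + r3 + r4 = s + r2 + r3 + r4 + 1 by omega),
    Wr_comp_val_of_eq_one _ (by omega) (omegaEntry_self_eq_one α s r2 r3 a b c d has),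
    Wr_congr fun i => deriv_omegaEntry_eventuallyEq α s r2 r3 a b c d ha hx i, Wr_const_mul,
    Fin.prod_univ_eq_prod_range (omegaDerivFactor α s r2 r3 c d), prod_omegaDerivFactor,
    ← mul_assoc, ← mul_assoc, ← pow_add, Even.neg_one_pow ⟨s, rfl⟩, one_mul]

theorem omega4_reduction_first_general (α : ℝ) (r1 r2 r3 r4 : ℕ) (a b c d : ℕ → ℕ)
    (ha : ∀ i j, i < j → j < r1 → a j < a i)
    (hr1 : 0 < r1) (ha0 : a (r1 - 1) = 0) :
    ∀ x : ℝ, 0 < x →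
      Omega4 α r1 r2 r3 r4 a b c d x =
        ((∏ i ∈ Finset.range r3, ((c i : ℝ) - α)) *
            (∏ i ∈ Finset.range r4, ((d i : ℝ) + 1))) *
          Omega4 (α + 1) (r1 - 1) r2 r3 r4 (fun i => a i - 1) b c (fun i => d i + 1) x := by
  intro x hx
  obtain ⟨s, rfl⟩ : ∃ s, r1 = s + 1 := ⟨r1 - 1, by omega⟩
  rw [Nat.add_sub_cancel] at ha0 ⊢
  have ha_ne : ∀ i < s, a i ≠ 0 := fun i hi => by
    have := ha i s hi (by omega)
    omega
  rw [Omega4_eq_mul_Wr, Omega4_eq_mul_Wr,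
    Wr_omegaEntry_of_eq_zero α s r2 r3 r4 a b c d ha_ne ha0 hx]
  push_cast
  ring_nf

/-- **Reduction when `n_{r1} = 0`.** If the first sequence ends in `0`, then for `x > 0`,
`Ω^{(α)}[n; m; m'; n'](x) = (∏ᵢ(m'_i − α) ∏ᵢ(n'_i + 1)) ·
Ω^{(α+1)}[n_1−1,…,n_{r1−1}−1; m; m'; n'_1+1,…,n'_{r4}+1](x)`. -/
theorem omega4_reduction_first (α : ℝ) (r1 r2 r3 r4 : ℕ) (a b c d : ℕ → ℕ)
    (ha : ∀ i j, i < j → j < r1 → a j < a i)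
    (hb : ∀ i j, i < j → j < r2 → b j < b i)
    (hc : ∀ i j, i < j → j < r3 → c j < c i)
    (hd : ∀ i j, i < j → j < r4 → d j < d i)
    (hr1 : 0 < r1) (ha0 : a (r1 - 1) = 0) :
    ∀ x : ℝ, 0 < x →
      Omega4 α r1 r2 r3 r4 a b c d x =
        ((∏ i ∈ Finset.range r3, ((c i : ℝ) - α)) *
            (∏ i ∈ Finset.range r4, ((d i : ℝ) + 1))) *
          Omega4 (α + 1) (r1 - 1) r2 r3 r4 (fun i => a i - 1) b c (fun i => d i + 1) x :=
  omega4_reduction_first_general α r1 r2 r3 r4 a b c d ha hr1 ha0
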